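/- arXiv:2205.15174 — 2 statements merged into one kernel-verified Lean document; each statement's English description precedes it below -/
import Mathlib

section
/- Let S := B(0, π^{-1/2}) ⊂ ℝ² be the open disc of unit area centered at the origin, and define w : ℝ² → ℝ², w(x) := (x₂, −x₁)/√2. Then ∫_S ‖w(x)‖² dx = 1/(4π), and for every continuously differentiable α : ℝ² → ℝ, ∫_S ‖∇α(x) + w(x)‖² dx ≥ 1/(4π). -/
/-!
Writing `J` for the rotation by a right angle, the field is `w = -J x / √2`. For `C¹` `α`, the
cross term `∫_S ⟪∇α, J x⟫ = ∫_S dα(x)(J x)` is the derivative at `θ = 0` of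
`θ ↦ ∫_S α(R_θ x)`, which is constant because the disc is rotation invariant. Hence
`∫_S ‖∇α + w‖² = ∫_S ‖∇α‖² + ∫_S ‖w‖² ≥ ∫_S ‖w‖²`, and `∫_S ‖w‖² = ½ ∫_S ‖x‖² = π r⁴ / 4`
with `r⁴ = π⁻²`.
-/

open MeasureTheory Metric Real Module
open scoped RealInnerProductSpace

theorem Continuous.integrableOn_ball {X E : Type*} [MetricSpace X] [ProperSpace X]
    [MeasurableSpace X] [OpensMeasurableSpace X] {μ : Measure X} [IsFiniteMeasureOnCompacts μ]
    [NormedAddCommGroup E] {f : X → E} (hf : Continuous f) (x : X) (r : ℝ) :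
    IntegrableOn f (ball x r) μ :=
  (hf.continuousOn.integrableOn_compact (isCompact_closedBall x r)).mono_set ball_subset_closedBall

theorem ContDiff.continuous_gradient {F : Type*} [NormedAddCommGroup F] [InnerProductSpace ℝ F]
    [CompleteSpace F] {f : F → ℝ} {n : WithTop ℕ∞} (hf : ContDiff ℝ n f) (hn : n ≠ 0) :
    Continuous (gradient f) :=
  (InnerProductSpace.toDual ℝ F).symm.continuous.comp (hf.continuous_fderiv hn)

theorem integral_norm_add_sq_of_integral_inner_eq_zero {X F : Type*} [MeasurableSpace X]
    {μ : Measure X} [NormedAddCommGroup F] [InnerProductSpace ℝ F] {u w : X → F}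
    (hu : Integrable (fun x => ‖u x‖ ^ 2) μ) (hw : Integrable (fun x => ‖w x‖ ^ 2) μ)
    (huw : Integrable (fun x => ⟪u x, w x⟫) μ) (h : ∫ x, ⟪u x, w x⟫ ∂μ = 0) :
    ∫ x, ‖u x + w x‖ ^ 2 ∂μ = ∫ x, ‖u x‖ ^ 2 ∂μ + ∫ x, ‖w x‖ ^ 2 ∂μ := by
  simp_rw [norm_add_sq_real]
  rw [integral_add (f := fun x => ‖u x‖ ^ 2 + 2 * ⟪u x, w x⟫) (hu.add (huw.const_mul 2)) hw,
    integral_add hu (huw.const_mul 2),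
    integral_const_mul, h, mul_zero, add_zero]

theorem setIntegral_ball_norm_pow {E : Type*} [NormedAddCommGroup E] [NormedSpace ℝ E]
    [FiniteDimensional ℝ E] [Nontrivial E] [MeasurableSpace E] [BorelSpace E]
    (μ : Measure E) [μ.IsAddHaarMeasure] (n : ℕ) {R : ℝ} (hR : 0 ≤ R) :
    ∫ x in ball 0 R, ‖x‖ ^ n ∂μ =
      finrank ℝ E * μ.real (ball 0 1) * R ^ (finrank ℝ E + n) / (finrank ℝ E + n) := by
  set d := finrank ℝ E
  have hd : 0 < d := finrank_pos
  have hball : ∫ x in ball 0 R, ‖x‖ ^ n ∂μ = ∫ x, (Set.Iio R).indicator (· ^ n) ‖x‖ ∂μ := by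
    rw [← integral_indicator measurableSet_ball, ball_zero_eq]
    rfl
  have hradial : ∫ y in Set.Ioi 0, y ^ (d - 1) • (Set.Iio R).indicator (· ^ n) y =
      R ^ (d + n) / (d + n) := by
    calc ∫ y in Set.Ioi 0, y ^ (d - 1) • (Set.Iio R).indicator (· ^ n) y
        = ∫ y in Set.Ioi 0, (Set.Iio R).indicator (· ^ (d + n - 1)) y := by
          refine integral_congr_ae (.of_forall fun y => ?_)
          by_cases hy : y < R
          · simp [hy, smul_eq_mul, ← pow_add]; congr 1; omega
          · simp [hy]
      _ = ∫ y in 0..R, y ^ (d + n - 1) := by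
          rw [integral_indicator measurableSet_Iio, Measure.restrict_restrict measurableSet_Iio,
            Set.Iio_inter_Ioi, intervalIntegral.integral_of_le hR, integral_Ioc_eq_integral_Ioo]
      _ = R ^ (d + n) / (d + n) := by
          rw [integral_pow, Nat.sub_add_cancel (by omega), zero_pow (by omega), sub_zero,
            Nat.cast_pred (by omega)]
          push_cast
          ring
  rw [hball, integral_fun_norm_addHaar, hradial, nsmul_eq_mul, smul_eq_mul]
  ring

theorem setIntegral_ball_comp_linearIsometryEquiv {E F : Type*} [NormedAddCommGroup E]
    [InnerProductSpace ℝ E] [FiniteDimensional ℝ E] [MeasurableSpace E] [BorelSpace E]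
    [NormedAddCommGroup F] [NormedSpace ℝ F] (L : E ≃ₗᵢ[ℝ] E) (f : E → F) (R : ℝ) :
    ∫ x in ball 0 R, f (L x) = ∫ x in ball 0 R, f x := by
  have hball : L '' ball 0 R = ball 0 R := by rw [L.image_ball, map_zero]
  rw [← L.measurePreserving.setIntegral_image_emb L.toHomeomorph.measurableEmbedding, hball]

namespace Orientation

variable {V : Type*} [NormedAddCommGroup V] [InnerProductSpace ℝ V] [Fact (finrank ℝ V = 2)]
  (o : Orientation ℝ V (Fin 2))

theorem hasDerivAt_rotation (x : V) (θ : ℝ) :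
    HasDerivAt (fun t : ℝ => o.rotation t x) (o.rotation θ (o.rightAngleRotation x)) θ := by
  simp only [o.rotation_apply, Real.Angle.cos_coe, Real.Angle.sin_coe,
    o.rightAngleRotation_rightAngleRotation]
  refine (((hasDerivAt_cos θ).smul_const x).add
    ((hasDerivAt_sin θ).smul_const (o.rightAngleRotation x))).congr_deriv ?_
  rw [neg_smul, smul_neg]
  abel

attribute [local instance] FiniteDimensional.of_fact_finrank_eq_two

theorem setIntegral_ball_fderiv_rightAngleRotation_eq_zero [MeasurableSpace V] [BorelSpace V]
    {α : V → ℝ} (hα : ContDiff ℝ 1 α) (R : ℝ) :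
    ∫ x in ball 0 R, fderiv ℝ α x (o.rightAngleRotation x) = 0 := by
  set J := o.rightAngleRotation
  set F : ℝ → V → ℝ := fun θ x => α (o.rotation θ x)
  set F' : ℝ → V → ℝ := fun θ x => fderiv ℝ α (o.rotation θ x) (o.rotation θ (J x))
  have hα' : Continuous (fderiv ℝ α) := hα.continuous_fderiv one_ne_zero
  obtain ⟨M, hM⟩ := (isCompact_closedBall (0 : V) R).exists_bound_of_continuousOn hα'.continuousOn
  have hF'_le : ∀ x ∈ ball (0 : V) R, ∀ θ : ℝ, ‖F' θ x‖ ≤ M * R := fun x hx θ => by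
    have hx : ‖x‖ < R := mem_ball_zero_iff.mp hx
    have hMθ := hM (o.rotation θ x) (by simpa using hx.le)
    calc ‖F' θ x‖ ≤ ‖fderiv ℝ α (o.rotation θ x)‖ * ‖o.rotation θ (J x)‖ :=
          ContinuousLinearMap.le_opNorm _ _
      _ ≤ M * R := by
          gcongr
          · exact (norm_nonneg _).trans hMθ
          · simpa [J] using hx.le
  have hF'_deriv : ∀ x θ, HasDerivAt (fun t => F t x) (F' θ x) θ := fun x θ =>
    ((hα.differentiable one_ne_zero).differentiableAt.hasFDerivAt).comp_hasDerivAt θ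
      (o.hasDerivAt_rotation x θ)
  have hderiv := (hasDerivAt_integral_of_dominated_loc_of_deriv_le
    (μ := volume.restrict (ball 0 R)) (bound := fun _ => M * R) (F := F) (F' := F') (x₀ := 0)
    Filter.univ_mem
    (.of_forall fun θ => (hα.continuous.comp (o.rotation θ).continuous).aestronglyMeasurable)
    ((hα.continuous.comp (o.rotation 0).continuous).integrableOn_ball 0 R)
    ((hα'.comp (o.rotation 0).continuous).clm_apply
      ((o.rotation 0).continuous.comp J.continuous)).aestronglyMeasurable
    ((ae_restrict_mem measurableSet_ball).mono fun x hx θ _ => hF'_le x hx θ)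
    (integrableOn_const measure_ball_lt_top.ne)
    (.of_forall fun x θ _ => hF'_deriv x θ)).2
  have hconst : (fun θ : ℝ => ∫ x in ball 0 R, F θ x) = fun _ => ∫ x in ball 0 R, α x :=
    funext fun θ => setIntegral_ball_comp_linearIsometryEquiv (o.rotation θ) α R
  rw [hconst] at hderiv
  simpa [F', o.rotation_zero] using ((hasDerivAt_const (0 : ℝ) _).unique hderiv).symm

end Orientation

instance : Fact (finrank ℝ (EuclideanSpace ℝ (Fin 2)) = 2) := ⟨finrank_euclideanSpace_fin⟩

attribute [local instance] Complex.finrank_real_complex_fact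

noncomputable def EuclideanSpace.orientationFinTwo :
    Orientation ℝ (EuclideanSpace ℝ (Fin 2)) (Fin 2) :=
  Complex.orientation.map (Fin 2) Complex.orthonormalBasisOneI.repr.toLinearEquiv

theorem EuclideanSpace.rightAngleRotation_orientationFinTwo (x : EuclideanSpace ℝ (Fin 2)) :
    orientationFinTwo.rightAngleRotation x = (WithLp.equiv 2 (Fin 2 → ℝ)).symm ![-x 1, x 0] := by
  rw [orientationFinTwo, Orientation.rightAngleRotation_map, Complex.rightAngleRotation]
  ext i
  fin_cases i <;> simp

theorem torsionField_eq_smul_rightAngleRotation (x : EuclideanSpace ℝ (Fin 2)) :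
    (WithLp.equiv 2 (Fin 2 → ℝ)).symm ![x 1 / √2, -(x 0) / √2] =
      -(√2)⁻¹ • EuclideanSpace.orientationFinTwo.rightAngleRotation x := by
  rw [EuclideanSpace.rightAngleRotation_orientationFinTwo]
  ext i
  fin_cases i <;> simp <;> ring

theorem norm_torsionField_sq (x : EuclideanSpace ℝ (Fin 2)) :
    ‖(WithLp.equiv 2 (Fin 2 → ℝ)).symm ![x 1 / √2, -(x 0) / √2]‖ ^ 2 = ‖x‖ ^ 2 / 2 := by
  rw [torsionField_eq_smul_rightAngleRotation, norm_smul, LinearIsometryEquiv.norm_map, mul_pow,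
    norm_neg, norm_inv, norm_of_nonneg (sqrt_nonneg 2), inv_pow, sq_sqrt zero_le_two,
    inv_mul_eq_div]

theorem continuous_torsionField :
    Continuous fun x : EuclideanSpace ℝ (Fin 2) =>
      (WithLp.equiv 2 (Fin 2 → ℝ)).symm ![x 1 / √2, -(x 0) / √2] := by
  simp_rw [torsionField_eq_smul_rightAngleRotation]
  exact (LinearIsometryEquiv.continuous _).const_smul (-(√2)⁻¹ : ℝ)

theorem EuclideanSpace.setIntegral_ball_norm_sq_fin_two {R : ℝ} (hR : 0 ≤ R) :
    ∫ x in ball (0 : EuclideanSpace ℝ (Fin 2)) R, ‖x‖ ^ 2 = π * R ^ 4 / 2 := by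
  rw [setIntegral_ball_norm_pow volume 2 hR, finrank_euclideanSpace_fin, measureReal_def,
    volume_ball_fin_two]
  simp only [ENNReal.toReal_mul, ENNReal.toReal_pow, ENNReal.toReal_ofReal zero_le_one,
    ENNReal.toReal_ofReal pi_pos.le, one_pow, one_mul]
  ring

/-- For the disc `S = B(0, π^{-1/2})` of unit area and
`w(x) = (x₂, −x₁)/√2`, one has `∫_S ‖w‖² = 1/(4π)` and for every `C¹` function
`α : ℝ² → ℝ`, `∫_S ‖∇α + w‖² ≥ 1/(4π)`. -/
theorem torsion_constant_disc :
    (∫ x in Metric.ball (0 : EuclideanSpace ℝ (Fin 2)) (Real.pi ^ (-(1/2) : ℝ)),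
        ‖(WithLp.equiv 2 (Fin 2 → ℝ)).symm
            ![x 1 / Real.sqrt 2, -(x 0) / Real.sqrt 2]‖ ^ 2) = 1 / (4 * Real.pi) ∧
    ∀ α : EuclideanSpace ℝ (Fin 2) → ℝ, ContDiff ℝ 1 α →
      1 / (4 * Real.pi) ≤
        ∫ x in Metric.ball (0 : EuclideanSpace ℝ (Fin 2)) (Real.pi ^ (-(1/2) : ℝ)),
          ‖gradient α x + (WithLp.equiv 2 (Fin 2 → ℝ)).symm
              ![x 1 / Real.sqrt 2, -(x 0) / Real.sqrt 2]‖ ^ 2 := by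
  set R := π ^ (-(1/2) : ℝ)
  have hR4 : R ^ 4 = (π ^ 2)⁻¹ := by
    rw [← Real.rpow_natCast, ← Real.rpow_mul pi_pos.le]
    norm_num
  have hw_integral : ∫ x in ball (0 : EuclideanSpace ℝ (Fin 2)) R,
      ‖(WithLp.equiv 2 (Fin 2 → ℝ)).symm ![x 1 / √2, -(x 0) / √2]‖ ^ 2 = 1 / (4 * π) := by
    simp_rw [norm_torsionField_sq]
    rw [integral_div, EuclideanSpace.setIntegral_ball_norm_sq_fin_two (by positivity), hR4]
    field_simp
    norm_num
  refine ⟨hw_integral, fun α hα => ?_⟩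
  have hcross : ∫ x in ball (0 : EuclideanSpace ℝ (Fin 2)) R,
      ⟪gradient α x, (WithLp.equiv 2 (Fin 2 → ℝ)).symm ![x 1 / √2, -(x 0) / √2]⟫ = 0 := by
    simp_rw [torsionField_eq_smul_rightAngleRotation, inner_smul_right, inner_gradient_left]
    rw [integral_const_mul,
      EuclideanSpace.orientationFinTwo.setIntegral_ball_fderiv_rightAngleRotation_eq_zero hα,
      mul_zero]
  have hgrad := hα.continuous_gradient one_ne_zero
  rw [integral_norm_add_sq_of_integral_inner_eq_zero ((hgrad.norm.pow 2).integrableOn_ball 0 R)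
    ((continuous_torsionField.norm.pow 2).integrableOn_ball 0 R)
    ((hgrad.inner continuous_torsionField).integrableOn_ball 0 R) hcross, hw_integral]
  exact le_add_of_nonneg_left (integral_nonneg fun x => by positivity)
end

section
/- Let λ ≥ 0, μ > 0, set c := λ/(4√2(λ+μ)) and define φ : ℝ² → ℝ³ by φ(x₂, x₃) := −c · (0, x₂² − x₃², 2 x₂ x₃)ᵀ. For x ∈ ℝ² let A(x) ∈ ℝ^{3×3} be the matrix whose first column is zero and whose second and third columns are the partial derivatives ∂₂φ(x) and ∂₃φ(x), respectively. Then for every x = (x₂, x₃) ∈ ℝ², (x₂/√2) e₁ e₁ᵀ + (A(x) + A(x)ᵀ)/2 = (x₂/√2) · diag(1, −λ/(2(λ+μ)), −λ/(2(λ+μ))). -/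
open Matrix

/-! The in-plane part of the corrector is `-c · z²` with `z = x₂ + i x₃`. Being holomorphic, it
has a conformal gradient (Cauchy–Riemann), whose symmetric part is the scalar `-2c x₂` on the
cross-section; the constant `c` is chosen so that `-2c x₂ = (x₂/√2)·(-λ/(2(λ+μ)))`. -/

theorem HasDerivAt.vec3 {𝕜 E : Type*} [NontriviallyNormedField 𝕜] [NormedAddCommGroup E]
    [NormedSpace 𝕜 E] {f g h : 𝕜 → E} {f' g' h' : E} {x : 𝕜}
    (hf : HasDerivAt f f' x) (hg : HasDerivAt g g' x) (hh : HasDerivAt h h' x) :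
    HasDerivAt (fun s => ![f s, g s, h s]) ![f', g', h'] x :=
  hasDerivAt_pi.2 fun i => by fin_cases i <;> assumption

def bendingCorrector (c a b : ℝ) : Fin 3 → ℝ := (-c) • ![0, a ^ 2 - b ^ 2, 2 * a * b]

theorem deriv_bendingCorrector_fst (c a b : ℝ) :
    deriv (fun s => bendingCorrector c s b) a = (-c) • ![0, 2 * a, 2 * b] := by
  refine HasDerivAt.deriv (HasDerivAt.const_smul (-c) ?_)
  refine ((hasDerivAt_const a (0 : ℝ)).vec3 ((hasDerivAt_pow 2 a).sub_const (b ^ 2))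
    (((hasDerivAt_id a).const_mul 2).mul_const b)).congr_deriv ?_
  simp

theorem deriv_bendingCorrector_snd (c a b : ℝ) :
    deriv (fun s => bendingCorrector c a s) b = (-c) • ![0, -(2 * b), 2 * a] := by
  refine HasDerivAt.deriv (HasDerivAt.const_smul (-c) ?_)
  refine ((hasDerivAt_const b (0 : ℝ)).vec3 ((hasDerivAt_pow 2 b).const_sub (a ^ 2))
    ((hasDerivAt_id b).const_mul (2 * a))).congr_deriv ?_
  simp

theorem half_add_transpose_of_conformal_columns (t p q : ℝ) :
    let A : Matrix (Fin 3) (Fin 3) ℝ :=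
      of fun i j => ![(0 : Fin 3 → ℝ), t • ![0, p, q], t • ![0, -q, p]] j i
    (1 / 2 : ℝ) • (A + Aᵀ) = (t * p) • diagonal ![0, 1, 1] := by
  intro A
  ext i j
  fin_cases i <;> fin_cases j <;> simp [A] <;> ring

theorem bending_corrector_identity_general (lam mu : ℝ)
    (x₂ x₃ : ℝ) :
    let c : ℝ := lam / (4 * Real.sqrt 2 * (lam + mu))
    let φ : ℝ → ℝ → (Fin 3 → ℝ) := fun a b => (-c) • ![0, a ^ 2 - b ^ 2, 2 * a * b]
    let A : Matrix (Fin 3) (Fin 3) ℝ := Matrix.of fun i j =>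
      ![(0 : Fin 3 → ℝ), deriv (fun s => φ s x₃) x₂, deriv (fun s => φ x₂ s) x₃] j i
    (x₂ / Real.sqrt 2) • Matrix.vecMulVec ![(1:ℝ), 0, 0] ![(1:ℝ), 0, 0] +
        (1/2 : ℝ) • (A + Aᵀ) =
      (x₂ / Real.sqrt 2) •
        Matrix.diagonal ![1, -lam / (2 * (lam + mu)), -lam / (2 * (lam + mu))] := by
  intro c φ A
  have h₂ : deriv (fun s => φ s x₃) x₂ = (-c) • ![0, 2 * x₂, 2 * x₃] :=
    deriv_bendingCorrector_fst c x₂ x₃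
  have h₃ : deriv (fun s => φ x₂ s) x₃ = (-c) • ![0, -(2 * x₃), 2 * x₂] :=
    deriv_bendingCorrector_snd c x₂ x₃
  have hsym : (1 / 2 : ℝ) • (A + Aᵀ) = (-c * (2 * x₂)) • diagonal ![0, 1, 1] := by
    simp only [A, h₂, h₃]
    exact half_add_transpose_of_conformal_columns (-c) (2 * x₂) (2 * x₃)
  rw [hsym]
  ext i j
  fin_cases i <;> fin_cases j <;> simp [c, vecMulVec] <;> field_simp <;> ring

/-- The explicit polynomial corrector
`φ(x₂,x₃) = −(λ/(4√2(λ+μ))) (0, x₂²−x₃², 2x₂x₃)ᵀ` relaxes the bending strain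
`(x₂/√2) e₁e₁ᵀ` to the diagonal strain `(x₂/√2)·diag(1, −λ/(2(λ+μ)), −λ/(2(λ+μ)))`:
`(x₂/√2) e₁e₁ᵀ + sym A = (x₂/√2) diag(1, −λ/(2(λ+μ)), −λ/(2(λ+μ)))`, where the
columns of `A` are `0`, `∂₂φ` and `∂₃φ`. -/
theorem bending_corrector_identity (lam mu : ℝ) (hlam : 0 ≤ lam) (hmu : 0 < mu)
    (x₂ x₃ : ℝ) :
    let c : ℝ := lam / (4 * Real.sqrt 2 * (lam + mu))
    let φ : ℝ → ℝ → (Fin 3 → ℝ) := fun a b => (-c) • ![0, a ^ 2 - b ^ 2, 2 * a * b]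
    let A : Matrix (Fin 3) (Fin 3) ℝ := Matrix.of fun i j =>
      ![(0 : Fin 3 → ℝ), deriv (fun s => φ s x₃) x₂, deriv (fun s => φ x₂ s) x₃] j i
    (x₂ / Real.sqrt 2) • Matrix.vecMulVec ![(1:ℝ), 0, 0] ![(1:ℝ), 0, 0] +
        (1/2 : ℝ) • (A + Aᵀ) =
      (x₂ / Real.sqrt 2) •
        Matrix.diagonal ![1, -lam / (2 * (lam + mu)), -lam / (2 * (lam + mu))] :=
  bending_corrector_identity_general lam mu x₂ x₃
end
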